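/- For every n ≥ 1 and every unitary transformation u of the n-dimensional subspace Vₙ = span{e₀, …, e_{n−1}} of ℓ²(ℤ), there exists an element g of the group G(T₊, U(2)) such that g restricted to Vₙ equals u and g acts as the identity on the orthogonal complement of Vₙ. That is, T₊, T₊⁻¹ and U(2) generate all U(n) transformations on consecutive basis spans. -/

import Mathlib

noncomputable section
open scoped InnerProductSpace ComplexConjugate
abbrev H2 : Type := lp (fun _ : ℤ => ℂ) 2
def e (k : ℤ) : H2 := lp.single 2 k (1 : ℂ)

def spanE01 : Submodule ℂ H2 := Submodule.span ℂ {e 0, e 1}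

def U2 : Set (unitary (H2 →L[ℂ] H2)) :=
  {g | (∀ x ∈ spanE01, (g : H2 →L[ℂ] H2) x ∈ spanE01) ∧
       ∀ x ∈ spanE01ᗮ, (g : H2 →L[ℂ] H2) x = x}

def GTU (T : unitary (H2 →L[ℂ] H2)) : Subgroup (unitary (H2 →L[ℂ] H2)) :=
  Subgroup.closure ({T} ∪ U2)

/-- `Vₙ = span {e₀, …, e_{n-1}}`. -/
def Vn (n : ℕ) : Submodule ℂ H2 :=
  Submodule.span ℂ (Set.range fun i : Fin n => e (i : ℕ))


@[simp] lemma inner_e_e (k l : ℤ) : ⟪e k, e l⟫_ℂ = if k = l then 1 else 0 := by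
  rw [e, lp.inner_single_left]
  simp [e, lp.single_apply, Pi.single_apply, eq_comm]

def op (a b c d : ℂ) : H2 →L[ℂ] H2 :=
  ContinuousLinearMap.id ℂ H2 + (innerSL ℂ (e 0)).smulRight (a • e 0 + b • e 1 - e 0)
    + (innerSL ℂ (e 1)).smulRight (c • e 0 + d • e 1 - e 1)

lemma op_apply (a b c d : ℂ) (x : H2) :
    op a b c d x = x + ⟪e 0, x⟫_ℂ • (a • e 0 + b • e 1 - e 0)
      + ⟪e 1, x⟫_ℂ • (c • e 0 + d • e 1 - e 1) := by
  simp [op]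

lemma op_op (a1 b1 c1 d1 a2 b2 c2 d2 : ℂ)
    (h11 : a2*a1 + c2*b1 = 1) (h12 : a2*c1 + c2*d1 = 0)
    (h21 : b2*a1 + d2*b1 = 0) (h22 : b2*c1 + d2*d1 = 1) (x : H2) :
    op a2 b2 c2 d2 (op a1 b1 c1 d1 x) = x := by
  simp only [op_apply, inner_add_right, inner_smul_right, inner_sub_right, inner_e_e]
  norm_num
  match_scalars
  · ring
  · linear_combination ⟪e 0, x⟫_ℂ * h11 + ⟪e 1, x⟫_ℂ * h12 - ⟪e 0, x⟫_ℂ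
  · linear_combination ⟪e 0, x⟫_ℂ * h21 + ⟪e 1, x⟫_ℂ * h22 - ⟪e 1, x⟫_ℂ

lemma op_adjoint (a b c d : ℂ) :
    ContinuousLinearMap.adjoint (op a b c d) = op (conj a) (conj c) (conj b) (conj d) := by
  symm
  rw [ContinuousLinearMap.eq_adjoint_iff]
  intro x y
  simp only [op_apply, inner_add_left, inner_add_right, inner_smul_left, inner_smul_right,
    inner_sub_left, inner_sub_right, inner_e_e, RingHomCompTriple.comp_apply, map_add, map_sub,
    map_mul, Complex.conj_conj, map_one, map_zero, apply_ite (starRingEnd ℂ)]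
  norm_num
  ring

lemma conj_eq (z w : ℂ) (h : z = w) : conj z = conj w := by rw [h]

def opU (a b c d : ℂ)
    (h1 : conj a * a + conj b * b = 1) (h2 : conj c * c + conj d * d = 1)
    (h3 : conj a * c + conj b * d = 0)
    (h4 : a * conj a + c * conj c = 1) (h5 : b * conj b + d * conj d = 1)
    (h6 : a * conj b + c * conj d = 0) : unitary (H2 →L[ℂ] H2) :=
  ⟨op a b c d, by
    have h3' : conj (conj a * c + conj b * d) = conj 0 := by rw [h3]
    have h6' : conj (a * conj b + c * conj d) = conj 0 := by rw [h6]
    simp only [map_add, map_mul, Complex.conj_conj, map_zero] at h3' h6'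
    rw [Unitary.mem_iff]
    constructor
    · rw [ContinuousLinearMap.star_eq_adjoint, op_adjoint]
      refine ContinuousLinearMap.ext fun x => ?_
      rw [ContinuousLinearMap.mul_apply, ContinuousLinearMap.one_apply]
      exact op_op a b c d (conj a) (conj c) (conj b) (conj d)
        (by linear_combination h1) (by linear_combination h3)
        (by linear_combination h3') (by linear_combination h2) x
    · rw [ContinuousLinearMap.star_eq_adjoint, op_adjoint]
      refine ContinuousLinearMap.ext fun x => ?_
      rw [ContinuousLinearMap.mul_apply, ContinuousLinearMap.one_apply]
      exact op_op (conj a) (conj c) (conj b) (conj d) a b c d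
        (by linear_combination h4) (by linear_combination h6)
        (by linear_combination h6') (by linear_combination h5) x⟩

lemma coe_opU (a b c d : ℂ) (h1 h2 h3 h4 h5 h6) :
    ((opU a b c d h1 h2 h3 h4 h5 h6 : unitary (H2 →L[ℂ] H2)) : H2 →L[ℂ] H2) = op a b c d := rfl

lemma op_fix (a b c d : ℂ) (x : H2) (e0 : ⟪e 0, x⟫_ℂ = 0) (e1 : ⟪e 1, x⟫_ℂ = 0) :
    op a b c d x = x := by
  simp [op_apply, e0, e1]

lemma op_mem (a b c d : ℂ) (K : Submodule ℂ H2) (he0 : e 0 ∈ K) (he1 : e 1 ∈ K)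
    (x : H2) (hx : x ∈ K) : op a b c d x ∈ K := by
  rw [op_apply]
  exact K.add_mem (K.add_mem hx (K.smul_mem _ (K.sub_mem
      (K.add_mem (K.smul_mem _ he0) (K.smul_mem _ he1)) he0)))
    (K.smul_mem _ (K.sub_mem (K.add_mem (K.smul_mem _ he0) (K.smul_mem _ he1)) he1))

lemma e0_mem_spanE01 : e 0 ∈ spanE01 := Submodule.subset_span (by simp)
lemma e1_mem_spanE01 : e 1 ∈ spanE01 := Submodule.subset_span (by simp)

lemma opU_mem_U2 (a b c d : ℂ) (h1 h2 h3 h4 h5 h6) :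
    opU a b c d h1 h2 h3 h4 h5 h6 ∈ U2 := by
  constructor
  · intro x hx
    exact op_mem a b c d spanE01 e0_mem_spanE01 e1_mem_spanE01 x hx
  · intro x hx
    exact op_fix a b c d x
      (Submodule.inner_right_of_mem_orthogonal e0_mem_spanE01 hx)
      (Submodule.inner_right_of_mem_orthogonal e1_mem_spanE01 hx)

section shift
variable (T : unitary (H2 →L[ℂ] H2)) (hT : ∀ k : ℤ, (T : H2 →L[ℂ] H2) (e k) = e (k + 1))

lemma coe_mul_apply (g h : unitary (H2 →L[ℂ] H2)) (x : H2) :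
    ((g * h : unitary (H2 →L[ℂ] H2)) : H2 →L[ℂ] H2) x
      = (g : H2 →L[ℂ] H2) ((h : H2 →L[ℂ] H2) x) := rfl

lemma inv_apply_apply (g : unitary (H2 →L[ℂ] H2)) (x : H2) :
    ((g⁻¹ : unitary (H2 →L[ℂ] H2)) : H2 →L[ℂ] H2) ((g : H2 →L[ℂ] H2) x) = x := by
  have h2 : ((g⁻¹ * g : unitary (H2 →L[ℂ] H2)) : H2 →L[ℂ] H2) x = x := by
    rw [inv_mul_cancel g, OneMemClass.coe_one, ContinuousLinearMap.one_apply]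
  exact h2

lemma apply_inv_apply (g : unitary (H2 →L[ℂ] H2)) (x : H2) :
    (g : H2 →L[ℂ] H2) (((g⁻¹ : unitary (H2 →L[ℂ] H2)) : H2 →L[ℂ] H2) x) = x := by
  have h2 : ((g * g⁻¹ : unitary (H2 →L[ℂ] H2)) : H2 →L[ℂ] H2) x = x := by
    rw [mul_inv_cancel g, OneMemClass.coe_one, ContinuousLinearMap.one_apply]
  exact h2

include hT in
lemma T_inv_apply (k : ℤ) :
    ((T⁻¹ : unitary (H2 →L[ℂ] H2)) : H2 →L[ℂ] H2) (e k) = e (k - 1) := by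
  have := inv_apply_apply T (e (k - 1))
  rwa [hT (k - 1), sub_add_cancel] at this

include hT in
lemma T_zpow_apply (m k : ℤ) :
    ((T ^ m : unitary (H2 →L[ℂ] H2)) : H2 →L[ℂ] H2) (e k) = e (k + m) := by
  induction m using Int.induction_on generalizing k with
  | zero => rw [zpow_zero, OneMemClass.coe_one, ContinuousLinearMap.one_apply, add_zero]
  | succ i ih =>
      rw [zpow_add_one, coe_mul_apply, hT k, ih (k+1), show k + 1 + i = k + (i + 1) by ring]
  | pred i ih =>
      rw [zpow_sub_one, coe_mul_apply, T_inv_apply T hT k, ih (k-1),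
        show k - 1 + (-i) = k + (-i - 1) by ring]

lemma op_e0 (a b c d : ℂ) : op a b c d (e 0) = a • e 0 + b • e 1 := by
  rw [op_apply, inner_e_e, inner_e_e]
  simp

lemma op_e1 (a b c d : ℂ) : op a b c d (e 1) = c • e 0 + d • e 1 := by
  rw [op_apply, inner_e_e, inner_e_e]
  simp

section conjsec
variable (m : ℤ) (a b c d : ℂ) (O : unitary (H2 →L[ℂ] H2))
  (hO : (O : H2 →L[ℂ] H2) = op a b c d)

include hT in
lemma inner_inv_zpow (x : H2) (j : ℤ) :
    ⟪e j, (((T ^ m)⁻¹ : unitary (H2 →L[ℂ] H2)) : H2 →L[ℂ] H2) x⟫_ℂ = ⟪e (j + m), x⟫_ℂ := by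
  have h := Unitary.inner_map_map (T ^ m) (e j)
    ((((T ^ m)⁻¹ : unitary (H2 →L[ℂ] H2)) : H2 →L[ℂ] H2) x)
  rw [T_zpow_apply T hT, apply_inv_apply] at h
  exact h.symm

include hT hO in
lemma conj_fix (x : H2) (h0 : ⟪e m, x⟫_ℂ = 0) (h1 : ⟪e (m + 1), x⟫_ℂ = 0) :
    ((T ^ m * O * (T ^ m)⁻¹ : unitary (H2 →L[ℂ] H2)) : H2 →L[ℂ] H2) x = x := by
  rw [coe_mul_apply, coe_mul_apply, hO, op_fix]
  · exact apply_inv_apply _ x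
  · rw [inner_inv_zpow T hT m x 0, zero_add]; exact h0
  · rw [inner_inv_zpow T hT m x 1, add_comm 1 m]; exact h1

include hT in
lemma zpow_smul_mem (K : Submodule ℂ H2) (hK0 : e m ∈ K) (hK1 : e (m + 1) ∈ K) (s t : ℂ) :
    ((T ^ m : unitary (H2 →L[ℂ] H2)) : H2 →L[ℂ] H2) (s • e 0 + t • e 1 - e 0) ∈ K ∧
    ((T ^ m : unitary (H2 →L[ℂ] H2)) : H2 →L[ℂ] H2) (s • e 0 + t • e 1 - e 1) ∈ K := by
  simp only [map_add, map_sub, map_smul, T_zpow_apply T hT, zero_add, add_comm 1 m]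
  exact ⟨K.sub_mem (K.add_mem (K.smul_mem _ hK0) (K.smul_mem _ hK1)) hK0,
    K.sub_mem (K.add_mem (K.smul_mem _ hK0) (K.smul_mem _ hK1)) hK1⟩

include hT hO in
lemma conj_mem (K : Submodule ℂ H2) (hK0 : e m ∈ K) (hK1 : e (m + 1) ∈ K)
    (x : H2) (hx : x ∈ K) :
    ((T ^ m * O * (T ^ m)⁻¹ : unitary (H2 →L[ℂ] H2)) : H2 →L[ℂ] H2) x ∈ K := by
  rw [coe_mul_apply, coe_mul_apply, hO, op_apply]
  simp only [map_add, map_smul]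
  rw [apply_inv_apply]
  exact K.add_mem (K.add_mem hx (K.smul_mem _ ((zpow_smul_mem T hT m K hK0 hK1 a b).1)))
    (K.smul_mem _ ((zpow_smul_mem T hT m K hK0 hK1 c d).2))

include hT hO in
lemma conj_e0 :
    ((T ^ m * O * (T ^ m)⁻¹ : unitary (H2 →L[ℂ] H2)) : H2 →L[ℂ] H2) (e m)
      = a • e m + b • e (m + 1) := by
  have hy : (((T ^ m)⁻¹ : unitary (H2 →L[ℂ] H2)) : H2 →L[ℂ] H2) (e m) = e 0 := by
    rw [← zpow_neg, T_zpow_apply T hT, add_neg_cancel]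
  rw [coe_mul_apply, coe_mul_apply, hy, hO, op_e0]
  simp only [map_add, map_smul, T_zpow_apply T hT, zero_add, add_comm 1 m]

include hT hO in
lemma conj_e1 :
    ((T ^ m * O * (T ^ m)⁻¹ : unitary (H2 →L[ℂ] H2)) : H2 →L[ℂ] H2) (e (m + 1))
      = c • e m + d • e (m + 1) := by
  have hy : (((T ^ m)⁻¹ : unitary (H2 →L[ℂ] H2)) : H2 →L[ℂ] H2) (e (m + 1)) = e 1 := by
    rw [← zpow_neg, T_zpow_apply T hT, show m + 1 + -m = 1 by ring]
  rw [coe_mul_apply, coe_mul_apply, hy, hO, op_e1]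
  simp only [map_add, map_smul, T_zpow_apply T hT, zero_add, add_comm 1 m]

lemma conj_mem_GTU (hO2 : O ∈ U2) :
    (T ^ m * O * (T ^ m)⁻¹ : unitary (H2 →L[ℂ] H2)) ∈ GTU T := by
  have hTm : T ∈ GTU T := Subgroup.subset_closure (Set.mem_union_left _ rfl)
  exact mul_mem (mul_mem (zpow_mem hTm m) (Subgroup.subset_closure (Set.mem_union_right _ hO2)))
    (inv_mem (zpow_mem hTm m))

end conjsec
end shift

section vn

instance VnFD (n : ℕ) : FiniteDimensional ℂ (Vn n) :=
  FiniteDimensional.span_of_finite ℂ (Set.finite_range _)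

example (n : ℕ) : CompleteSpace (Vn n) := by infer_instance

lemma e_mem_Vn {n i : ℕ} (h : i < n) : e i ∈ Vn n :=
  Submodule.subset_span ⟨⟨i, h⟩, rfl⟩

lemma Vn_le_succ (n : ℕ) : Vn n ≤ Vn (n + 1) := by
  rw [Vn, Submodule.span_le]
  rintro _ ⟨i, rfl⟩
  exact e_mem_Vn (by omega : (i : ℕ) < n + 1)

lemma mem_orth_of_span (s : Set H2) (z : H2) (h : ∀ v ∈ s, ⟪v, z⟫_ℂ = 0) :
    z ∈ (Submodule.span ℂ s)ᗮ := by
  rw [Submodule.mem_orthogonal]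
  intro u hu
  have hle : Submodule.span ℂ s ≤ (ℂ ∙ z)ᗮ :=
    Submodule.span_le.2 fun v hv =>
      Submodule.mem_orthogonal_singleton_iff_inner_left.2 (h v hv)
  exact Submodule.mem_orthogonal_singleton_iff_inner_left.1 (hle hu)

lemma e_orth_Vn {n : ℕ} {k : ℤ} (hk : ∀ i : ℕ, i < n → (i : ℤ) ≠ k) : e k ∈ (Vn n)ᗮ := by
  refine mem_orth_of_span _ _ ?_
  rintro _ ⟨i, rfl⟩
  rw [inner_e_e, if_neg (hk i i.isLt)]

lemma projA (n : ℕ) (y : H2) (hy : y ∈ Vn (n + 1)) :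
    y - ⟪e n, y⟫_ℂ • e n ∈ Vn n := by
  let L : H2 →L[ℂ] H2 := ContinuousLinearMap.id ℂ H2 - (innerSL ℂ (e n)).smulRight (e n)
  have hle : Vn (n + 1) ≤ (Vn n).comap (L : H2 →ₗ[ℂ] H2) := by
    rw [Vn, Submodule.span_le]
    rintro _ ⟨i, rfl⟩
    have hLe : L (e i) = e i - ⟪e (n:ℤ), e ((i:ℕ):ℤ)⟫_ℂ • e n := by simp [L]
    have : e ((i:ℕ):ℤ) ∈ Submodule.comap (L : H2 →ₗ[ℂ] H2) (Vn n) := by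
      simp only [Submodule.mem_comap, ContinuousLinearMap.coe_coe]
      rw [hLe, inner_e_e]
      rcases Nat.lt_succ_iff_lt_or_eq.1 i.isLt with h | h
      · rw [if_neg (by exact_mod_cast Nat.ne_of_gt h), zero_smul, sub_zero]
        exact e_mem_Vn h
      · have hc : ((n : ℕ) : ℤ) = ((i : ℕ) : ℤ) := by exact_mod_cast h.symm
        rw [if_pos hc, one_smul, show ((i:ℕ):ℤ) = (n:ℤ) from hc.symm, sub_self]
        exact (Vn n).zero_mem
    exact this
  have := hle hy
  simpa [L, Submodule.mem_comap] using this

lemma projB (n : ℕ) (x : H2) (hx : x ∈ (Vn n)ᗮ) :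
    x - ⟪e n, x⟫_ℂ • e n ∈ (Vn (n + 1))ᗮ := by
  refine mem_orth_of_span _ _ ?_
  rintro _ ⟨i, rfl⟩
  rw [inner_sub_right, inner_smul_right, inner_e_e]
  rcases Nat.lt_succ_iff_lt_or_eq.1 i.isLt with h | h
  · rw [if_neg (by exact_mod_cast Nat.ne_of_lt h)]
    rw [Submodule.inner_right_of_mem_orthogonal (e_mem_Vn h) hx]
    ring
  · have hc : ((i : ℕ) : ℤ) = (n : ℤ) := by exact_mod_cast h
    simp only [hc]
    simp

end vn

section keysec
variable (T : unitary (H2 →L[ℂ] H2)) (hT : ∀ k : ℤ, (T : H2 →L[ℂ] H2) (e k) = e (k + 1))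

include hT in
lemma key : ∀ (n : ℕ) (v : H2), v ∈ Vn (n + 1) → ⟪v, v⟫_ℂ = 1 →
    ∃ g : unitary (H2 →L[ℂ] H2), g ∈ GTU T ∧
      (∀ x ∈ Vn (n + 1), (g : H2 →L[ℂ] H2) x ∈ Vn (n + 1)) ∧
      (∀ x ∈ (Vn (n + 1))ᗮ, (g : H2 →L[ℂ] H2) x = x) ∧
      (g : H2 →L[ℂ] H2) (e n) = v := by
  intro n
  induction n with
  | zero =>
      intro v hv hvv
      have he0' : e (0 : ℤ) ∈ Vn 1 := by
        simpa using e_mem_Vn (by norm_num : (0:ℕ) < 1)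
      have hv0 : v ∈ (ℂ ∙ e (0:ℤ)) := by
        have hV1 : Vn 1 = (ℂ ∙ e (0:ℤ)) := by
          rw [Vn]
          congr 1
          rw [Set.range_unique]
          norm_num
        rwa [← hV1]
      obtain ⟨t, ht⟩ := Submodule.mem_span_singleton.1 hv0
      have ht1 : conj t * t = 1 := by
        have h := hvv
        rw [← ht, inner_smul_left, inner_smul_right, inner_e_e, if_pos rfl] at h
        simpa using h
      have h1 : conj t * t + conj (0:ℂ) * 0 = 1 := by
        simp only [map_zero, mul_zero, zero_mul, add_zero]; exact ht1
      have h2 : conj (0:ℂ) * 0 + conj (1:ℂ) * 1 = 1 := by simp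
      have h3 : conj t * 0 + conj (0:ℂ) * 1 = 0 := by simp
      have h4 : t * conj t + (0:ℂ) * conj 0 = 1 := by
        simp only [map_zero, mul_zero, zero_mul, add_zero]; linear_combination ht1
      have h5 : (0:ℂ) * conj 0 + (1:ℂ) * conj 1 = 1 := by simp
      have h6 : t * conj 0 + (0:ℂ) * conj 1 = 0 := by simp
      refine ⟨opU t 0 0 1 h1 h2 h3 h4 h5 h6, ?_, ?_, ?_, ?_⟩
      · exact Subgroup.subset_closure
          (Set.mem_union_right _ (opU_mem_U2 t 0 0 1 h1 h2 h3 h4 h5 h6))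
      · intro x hx
        rw [coe_opU, op_apply]
        simp only [zero_smul, one_smul, zero_add, sub_self, smul_zero, add_zero]
        exact (Vn 1).add_mem hx ((Vn 1).smul_mem _
          ((Vn 1).sub_mem ((Vn 1).smul_mem _ he0') he0'))
      · intro x hx
        rw [coe_opU, op_apply]
        have h0 : ⟪e (0:ℤ), x⟫_ℂ = 0 :=
          Submodule.inner_right_of_mem_orthogonal he0' hx
        simp [h0]
      · rw [coe_opU]
        have hc0 : e (((0:ℕ):ℤ)) = e (0:ℤ) := by norm_num
        rw [hc0, op_e0, ← ht]
        simp
  | succ n ih =>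
      intro v hv hvv
      have hcast : (((n+1:ℕ)):ℤ) = (n:ℤ)+1 := by push_cast; ring
      set t : ℂ := ⟪e ((n:ℤ)+1), v⟫_ℂ with htdef
      set y : H2 := v - t • e ((n:ℤ)+1) with hydef
      have hyV : y ∈ Vn (n+1) := by
        have h := projA (n+1) v hv
        rwa [hcast] at h
      have hty : ⟪e ((n:ℤ)+1), y⟫_ℂ = 0 := by
        rw [hydef, inner_sub_right, inner_smul_right, inner_e_e, if_pos rfl, mul_one, sub_self]
      have hyy : ⟪y, y⟫_ℂ = 1 - conj t * t := by
        have h1 : ⟪y, e ((n:ℤ)+1)⟫_ℂ = 0 := by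
          rw [← inner_conj_symm, hty, map_zero]
        calc ⟪y, y⟫_ℂ = ⟪y, v⟫_ℂ - t * ⟪y, e ((n:ℤ)+1)⟫_ℂ := by
              rw [hydef]
              rw [inner_sub_right, inner_smul_right]
          _ = ⟪y, v⟫_ℂ := by rw [h1, mul_zero, sub_zero]
          _ = ⟪v, v⟫_ℂ - conj t * ⟪e ((n:ℤ)+1), v⟫_ℂ := by
              rw [hydef, inner_sub_left, inner_smul_left]
          _ = 1 - conj t * t := by rw [hvv, ← htdef]
      have hs2 : ((‖y‖:ℂ))^2 = 1 - conj t * t := by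
        rw [← hyy]; exact (inner_self_eq_norm_sq_to_K y).symm
      set s : ℂ := ((‖y‖:ℝ):ℂ) with hsdef
      have hcs : conj s = s := Complex.conj_ofReal _
      obtain ⟨w, hwV, hww, hsw⟩ : ∃ w : H2, w ∈ Vn (n+1) ∧ ⟪w, w⟫_ℂ = 1 ∧ s • w = y := by
        by_cases hy0 : y = 0
        · refine ⟨e (n:ℕ), e_mem_Vn (by omega), by rw [inner_e_e, if_pos rfl], ?_⟩
          rw [hsdef, hy0]
          simp
        · have hsne : s ≠ 0 := by
            rw [hsdef]
            exact_mod_cast Complex.ofReal_ne_zero.2 (norm_ne_zero_iff.2 hy0)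
          refine ⟨s⁻¹ • y, Submodule.smul_mem _ _ hyV, ?_, ?_⟩
          · rw [inner_smul_left, inner_smul_right]
            have hyy2 : ⟪y, y⟫_ℂ = s^2 := by
              rw [hsdef]; exact inner_self_eq_norm_sq_to_K y
            rw [hyy2, map_inv₀, hcs]
            field_simp
          · rw [smul_smul, mul_inv_cancel₀ hsne, one_smul]
      obtain ⟨h, hhG, hhV, hhO, hhe⟩ := ih w hwV hww
      have h1 : conj (conj t) * (conj t) + conj (-s) * (-s) = 1 := by
        rw [Complex.conj_conj, map_neg, hcs]; linear_combination hs2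
      have h2 : conj s * s + conj t * t = 1 := by rw [hcs]; linear_combination hs2
      have h3 : conj (conj t) * s + conj (-s) * t = 0 := by
        rw [Complex.conj_conj, map_neg, hcs]; ring
      have h4 : conj t * conj (conj t) + s * conj s = 1 := by
        rw [Complex.conj_conj, hcs]; linear_combination hs2
      have h5 : (-s) * conj (-s) + t * conj t = 1 := by
        rw [map_neg, hcs]; linear_combination hs2
      have h6 : conj t * conj (-s) + s * conj t = 0 := by rw [map_neg, hcs]; ring
      set O : unitary (H2 →L[ℂ] H2) := opU (conj t) (-s) s t h1 h2 h3 h4 h5 h6 with hOdef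
      have hOcoe : (O : H2 →L[ℂ] H2) = op (conj t) (-s) s t := rfl
      set r : unitary (H2 →L[ℂ] H2) := T ^ (n:ℤ) * O * (T ^ (n:ℤ))⁻¹ with hrdef
      have hen : e ((n:ℕ):ℤ) ∈ Vn (n+2) := e_mem_Vn (by omega)
      have hen1 : e ((n:ℤ)+1) ∈ Vn (n+2) := by
        have := e_mem_Vn (show n+1 < n+2 by omega)
        rwa [hcast] at this
      have hen1O : e ((n:ℤ)+1) ∈ (Vn (n+1))ᗮ := by
        refine e_orth_Vn ?_
        intro i hi
        omega
      have hfix1 : (h : H2 →L[ℂ] H2) (e ((n:ℤ)+1)) = e ((n:ℤ)+1) := hhO _ hen1O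
      have hpres : ∀ z ∈ Vn (n+2), (h : H2 →L[ℂ] H2) z ∈ Vn (n+2) := by
        intro z hz
        have hz' := projA (n+1) z hz
        rw [hcast] at hz'
        have hzeq : z = (z - ⟪e ((n:ℤ)+1), z⟫_ℂ • e ((n:ℤ)+1))
            + ⟪e ((n:ℤ)+1), z⟫_ℂ • e ((n:ℤ)+1) := (sub_add_cancel _ _).symm
        rw [hzeq, map_add, map_smul, hfix1]
        exact (Vn (n+2)).add_mem (Vn_le_succ (n+1) (hhV _ hz'))
          ((Vn (n+2)).smul_mem _ hen1)
      refine ⟨h * r, ?_, ?_, ?_, ?_⟩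
      · exact mul_mem hhG (conj_mem_GTU T (n:ℤ) O
          (opU_mem_U2 (conj t) (-s) s t h1 h2 h3 h4 h5 h6))
      · intro x hx
        rw [coe_mul_apply]
        exact hpres _ (conj_mem T hT (n:ℤ) (conj t) (-s) s t O hOcoe (Vn (n+2)) hen hen1 x hx)
      · intro x hx
        rw [coe_mul_apply]
        rw [conj_fix T hT (n:ℤ) (conj t) (-s) s t O hOcoe x
          (Submodule.inner_right_of_mem_orthogonal hen hx)
          (Submodule.inner_right_of_mem_orthogonal hen1 hx)]
        exact hhO x ((Submodule.orthogonal_le (Vn_le_succ (n+1))) hx)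
      · rw [coe_mul_apply]
        have hr1 : (r : H2 →L[ℂ] H2) (e ((n:ℤ)+1)) = s • e ((n:ℕ):ℤ) + t • e ((n:ℤ)+1) :=
          conj_e1 T hT (n:ℤ) (conj t) (-s) s t O hOcoe
        rw [show ((↑(n+1):ℤ)) = (n:ℤ)+1 from hcast, hr1, map_add, map_smul, map_smul, hhe, hfix1,
          hsw]
        rw [hydef]
        abel
end keysec

lemma main (T : unitary (H2 →L[ℂ] H2))
    (hT : ∀ k : ℤ, (T : H2 →L[ℂ] H2) (e k) = e (k + 1)) :
    ∀ n : ℕ, 1 ≤ n → ∀ u : unitary (H2 →L[ℂ] H2),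
      (∀ x ∈ Vn n, (u : H2 →L[ℂ] H2) x ∈ Vn n) →
      (∀ x ∈ (Vn n)ᗮ, (u : H2 →L[ℂ] H2) x = x) → u ∈ GTU T := by
  intro n hn
  induction n, hn using Nat.le_induction with
  | base =>
      intro u hu_inv hu_id
      have he0V : e ((0:ℕ):ℤ) ∈ Vn 1 := e_mem_Vn (by norm_num)
      have hV1 : Vn 1 ≤ spanE01 := by
        rw [Vn, Submodule.span_le]
        rintro _ ⟨i, rfl⟩
        obtain rfl : i = 0 := Subsingleton.elim i 0
        simpa using e0_mem_spanE01
      have hu2 : u ∈ U2 := by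
        constructor
        · intro x hx
          have hle : spanE01 ≤ spanE01.comap
              (((u : H2 →L[ℂ] H2)) : H2 →ₗ[ℂ] H2) := by
            rw [spanE01, Submodule.span_le]
            rintro z hz
            simp only [Set.mem_insert_iff, Set.mem_singleton_iff] at hz
            rcases hz with rfl | rfl
            · refine Submodule.mem_comap.2 ?_
              have : (u : H2 →L[ℂ] H2) (e ((0:ℕ):ℤ)) ∈ Vn 1 := hu_inv _ he0V
              simpa [spanE01] using hV1 this
            · refine Submodule.mem_comap.2 ?_
              have h1O : e (1:ℤ) ∈ (Vn 1)ᗮ := e_orth_Vn (by intro i hi; omega)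
              simpa [hu_id _ h1O, spanE01] using e1_mem_spanE01
          exact Submodule.mem_comap.1 (hle hx)
        · intro x hx
          exact hu_id x ((Submodule.orthogonal_le hV1) hx)
      exact Subgroup.subset_closure (Set.mem_union_right _ hu2)
  | succ n hn1 ih =>
      intro u hu_inv hu_id
      have henV : e ((n:ℕ):ℤ) ∈ Vn (n+1) := e_mem_Vn (by omega)
      have henO : e ((n:ℕ):ℤ) ∈ (Vn n)ᗮ := e_orth_Vn (by intro i hi; omega)
      set v := (u : H2 →L[ℂ] H2) (e ((n:ℕ):ℤ)) with hvdef
      have hvV : v ∈ Vn (n+1) := hu_inv _ henV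
      have hvv : ⟪v, v⟫_ℂ = 1 := by
        rw [hvdef, Unitary.inner_map_map, inner_e_e, if_pos rfl]
      obtain ⟨g, hgG, hgV, hgO, hge⟩ := key T hT n v hvV hvv
      have hginvO : ∀ x ∈ (Vn (n+1))ᗮ,
          ((g⁻¹ : unitary (H2 →L[ℂ] H2)) : H2 →L[ℂ] H2) x = x := by
        intro x hx
        conv_lhs => rw [← hgO x hx]
        exact inv_apply_apply g x
      have hginvV : ∀ z ∈ Vn (n+1),
          ((g⁻¹ : unitary (H2 →L[ℂ] H2)) : H2 →L[ℂ] H2) z ∈ Vn (n+1) := by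
        intro z hz
        rw [← Submodule.orthogonal_orthogonal (Vn (n+1)), Submodule.mem_orthogonal]
        intro q hq
        calc ⟪q, ((g⁻¹ : unitary (H2 →L[ℂ] H2)) : H2 →L[ℂ] H2) z⟫_ℂ
            = ⟪(g : H2 →L[ℂ] H2) q,
                (g : H2 →L[ℂ] H2) (((g⁻¹ : unitary (H2 →L[ℂ] H2)) : H2 →L[ℂ] H2) z)⟫_ℂ :=
              (Unitary.inner_map_map g q _).symm
          _ = ⟪q, z⟫_ℂ := by rw [hgO q hq, apply_inv_apply]
          _ = 0 := Submodule.inner_left_of_mem_orthogonal hz hq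
      set w : unitary (H2 →L[ℂ] H2) := g⁻¹ * u with hwdef
      have hwapp : ∀ x : H2, (w : H2 →L[ℂ] H2) x
          = ((g⁻¹ : unitary (H2 →L[ℂ] H2)) : H2 →L[ℂ] H2) ((u : H2 →L[ℂ] H2) x) :=
        fun x => rfl
      have hw_inv : ∀ x ∈ Vn n, (w : H2 →L[ℂ] H2) x ∈ Vn n := by
        intro x hx
        have hux : (u : H2 →L[ℂ] H2) x ∈ Vn (n+1) := hu_inv x (Vn_le_succ n hx)
        have hmem : (w : H2 →L[ℂ] H2) x ∈ Vn (n+1) := by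
          rw [hwapp]; exact hginvV _ hux
        have hinner : ⟪e ((n:ℕ):ℤ), (w : H2 →L[ℂ] H2) x⟫_ℂ = 0 := by
          rw [hwapp]
          calc ⟪e ((n:ℕ):ℤ), ((g⁻¹ : unitary (H2 →L[ℂ] H2)) : H2 →L[ℂ] H2)
                ((u : H2 →L[ℂ] H2) x)⟫_ℂ
              = ⟪(g : H2 →L[ℂ] H2) (e ((n:ℕ):ℤ)), (g : H2 →L[ℂ] H2)
                  (((g⁻¹ : unitary (H2 →L[ℂ] H2)) : H2 →L[ℂ] H2)
                    ((u : H2 →L[ℂ] H2) x))⟫_ℂ := (Unitary.inner_map_map g _ _).symm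
            _ = ⟪v, (u : H2 →L[ℂ] H2) x⟫_ℂ := by rw [hge, apply_inv_apply]
            _ = ⟪e ((n:ℕ):ℤ), x⟫_ℂ := by rw [hvdef, Unitary.inner_map_map]
            _ = 0 := Submodule.inner_left_of_mem_orthogonal hx henO
        have := projA n _ hmem
        rwa [hinner, zero_smul, sub_zero] at this
      have hgv : ((g⁻¹ : unitary (H2 →L[ℂ] H2)) : H2 →L[ℂ] H2) v = e ((n:ℕ):ℤ) := by
        rw [← hge]; exact inv_apply_apply g _
      have hw_id : ∀ x ∈ (Vn n)ᗮ, (w : H2 →L[ℂ] H2) x = x := by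
        intro x hx
        have hx' := projB n x hx
        have hxeq : x = (x - ⟪e ((n:ℕ):ℤ), x⟫_ℂ • e ((n:ℕ):ℤ))
            + ⟪e ((n:ℕ):ℤ), x⟫_ℂ • e ((n:ℕ):ℤ) := (sub_add_cancel _ _).symm
        conv_lhs => rw [hxeq]
        rw [hwapp, map_add, map_smul, hu_id _ hx', ← hvdef, map_add, map_smul,
          hginvO _ hx', hgv]
        exact hxeq.symm
      have hwG : w ∈ GTU T := ih w hw_inv hw_id
      have hu : u = g * w := by rw [hwdef, ← mul_assoc, mul_inv_cancel, one_mul]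
      rw [hu]
      exact mul_mem hgG hwG


theorem stmt1 (T : unitary (H2 →L[ℂ] H2))
    (hT : ∀ k : ℤ, (T : H2 →L[ℂ] H2) (e k) = e (k + 1))
    (n : ℕ) (hn : 1 ≤ n)
    (u : unitary (H2 →L[ℂ] H2))
    (hu_inv : ∀ x ∈ Vn n, (u : H2 →L[ℂ] H2) x ∈ Vn n)
    (hu_id : ∀ x ∈ (Vn n)ᗮ, (u : H2 →L[ℂ] H2) x = x) :
    u ∈ GTU T := by
  exact main T hT n hn u hu_inv hu_id
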